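/- G*₋₁(x,y) = 3 if and only if (x,y) ∈ {(4n−2, 4n), (4n−1, 4n+1), (4n, 4n−2), (4n+1, 4n−1) : n ≥ 2} ∪ {(0,4),(1,5),(2,3),(3,2),(4,0),(5,1)}. -/
import Mathlib

/-- mex of a finite set of integers: least nonnegative integer not in the set
(negative elements are ignored). -/
noncomputable def mexZ (S : Finset ℤ) : ℤ := ((sInf {n : ℕ | (n : ℤ) ∉ S} : ℕ) : ℤ)

/-- `G*₋₁(x,y)`: `G*₋₁(0,0) = 0`, `G*₋₁(0,1) = G*₋₁(1,0) = -1`, and for `x + y > 1`,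
`G*₋₁(x,y) = mex({G*₋₁(x',y) : x' < x} ∪ {G*₋₁(x,y') : y' < y})`. -/
noncomputable def Gs : ℕ → ℕ → ℤ
  | x, y =>
    if x + y = 0 then 0 else if x + y = 1 then -1 else
    mexZ (((Finset.range x).attach.image fun x' => Gs x'.1 y) ∪
          ((Finset.range y).attach.image fun y' => Gs x y'.1))
termination_by x y => x + y
decreasing_by
  · have := x'.2; simp only [Finset.mem_range] at this; omega
  · have := y'.2; simp only [Finset.mem_range] at this; omega

/-! ### mex facts -/

lemma mexZ_nonempty (S : Finset ℤ) : {n : ℕ | (n : ℤ) ∉ S}.Nonempty := by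
  use (S.image Int.toNat).sup id + 1
  intro h
  have h2 : ((S.image Int.toNat).sup id + 1) ∈ S.image Int.toNat :=
    Finset.mem_image.2 ⟨_, h, by simp⟩
  have := Finset.le_sup (f := id) h2
  simp only [id] at this
  omega

lemma mexZ_eq_iff (S : Finset ℤ) (v : ℕ) :
    mexZ S = v ↔ ((v : ℤ) ∉ S ∧ ∀ w : ℕ, w < v → (w : ℤ) ∈ S) := by
  unfold mexZ
  rw [Nat.cast_inj]
  constructor
  · intro h
    subst h
    refine ⟨Nat.sInf_mem (mexZ_nonempty S), fun w hw => ?_⟩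
    by_contra hc
    have := Nat.sInf_le (show w ∈ {n : ℕ | (n : ℤ) ∉ S} from hc)
    omega
  · rintro ⟨h1, h2⟩
    refine le_antisymm (Nat.sInf_le h1) ?_
    by_contra hc
    push_neg at hc
    exact (Nat.sInf_mem (mexZ_nonempty S)) (h2 _ hc)

/-! ### partner functions -/

def r0 (x : ℕ) : ℕ := x
def r1 (x : ℕ) : ℕ := if x = 0 then 2 else if x = 1 then 3 else if x = 2 then 0 else
  if x = 3 then 1 else if x % 2 = 0 then x + 1 else x - 1
def r2 (x : ℕ) : ℕ := if x = 0 then 3 else if x = 1 then 2 else if x = 2 then 1 else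
  if x = 3 then 0 else if x % 4 ≤ 1 then x + 2 else x - 2
def r3 (x : ℕ) : ℕ := if x = 0 then 4 else if x = 1 then 5 else if x = 2 then 3 else
  if x = 3 then 2 else if x = 4 then 0 else if x = 5 then 1 else
  if x % 4 ≤ 1 then x - 2 else x + 2

lemma r1_spec (x : ℕ) : (x = 0 ∧ r1 x = 2) ∨ (x = 1 ∧ r1 x = 3) ∨ (x = 2 ∧ r1 x = 0) ∨
    (x = 3 ∧ r1 x = 1) ∨ (4 ≤ x ∧ x % 2 = 0 ∧ r1 x = x + 1) ∨
    (4 ≤ x ∧ x % 2 = 1 ∧ r1 x = x - 1) := by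
  unfold r1; split_ifs <;> omega

lemma r2_spec (x : ℕ) : (x = 0 ∧ r2 x = 3) ∨ (x = 1 ∧ r2 x = 2) ∨ (x = 2 ∧ r2 x = 1) ∨
    (x = 3 ∧ r2 x = 0) ∨ (4 ≤ x ∧ x % 4 ≤ 1 ∧ r2 x = x + 2) ∨
    (4 ≤ x ∧ 2 ≤ x % 4 ∧ r2 x = x - 2) := by
  unfold r2; split_ifs <;> omega

lemma r3_spec (x : ℕ) : (x = 0 ∧ r3 x = 4) ∨ (x = 1 ∧ r3 x = 5) ∨ (x = 2 ∧ r3 x = 3) ∨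
    (x = 3 ∧ r3 x = 2) ∨ (x = 4 ∧ r3 x = 0) ∨ (x = 5 ∧ r3 x = 1) ∨
    (6 ≤ x ∧ x % 4 ≤ 1 ∧ r3 x = x - 2) ∨ (6 ≤ x ∧ 2 ≤ x % 4 ∧ r3 x = x + 2) := by
  unfold r3; split_ifs <;> omega

lemma r0_invol (x : ℕ) : r0 (r0 x) = x := rfl
lemma r1_invol (x : ℕ) : r1 (r1 x) = x := by
  have h1 := r1_spec x; have h2 := r1_spec (r1 x); omega
lemma r2_invol (x : ℕ) : r2 (r2 x) = x := by
  have h1 := r2_spec x; have h2 := r2_spec (r2 x); omega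
lemma r3_invol (x : ℕ) : r3 (r3 x) = x := by
  have h1 := r3_spec x; have h2 := r3_spec (r3 x); omega

/-! ### arithmetic lemmas -/

lemma arith0 (x y : ℕ) (h : 2 ≤ x + y) :
    (¬(r0 y < x ∨ r0 x < y)) ↔ y = r0 x := by unfold r0; omega

lemma arith1 (x y : ℕ) (h : 2 ≤ x + y) :
    (¬(r1 y < x ∨ r1 x < y) ∧ (r0 y < x ∨ r0 x < y)) ↔ y = r1 x := by
  have h1x := r1_spec x; have h1y := r1_spec y; unfold r0; omega

lemma arith2 (x y : ℕ) (h : 2 ≤ x + y) :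
    (¬(r2 y < x ∨ r2 x < y) ∧ (r0 y < x ∨ r0 x < y) ∧ (r1 y < x ∨ r1 x < y)) ↔ y = r2 x := by
  have h1x := r1_spec x; have h1y := r1_spec y
  have h2x := r2_spec x; have h2y := r2_spec y
  unfold r0; omega

lemma arith3 (x y : ℕ) (h : 2 ≤ x + y) :
    (¬(r3 y < x ∨ r3 x < y) ∧ (r0 y < x ∨ r0 x < y) ∧ (r1 y < x ∨ r1 x < y) ∧
      (r2 y < x ∨ r2 x < y)) ↔ y = r3 x := by
  have h1x := r1_spec x; have h1y := r1_spec y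
  have h2x := r2_spec x; have h2y := r2_spec y
  have h3x := r3_spec x; have h3y := r3_spec y
  unfold r0; omega

/-! ### unfolding Gs -/

noncomputable def preds (x y : ℕ) : Finset ℤ :=
  ((Finset.range x).attach.image fun x' => Gs x'.1 y) ∪
  ((Finset.range y).attach.image fun y' => Gs x y'.1)

lemma Gs_eq (x y : ℕ) (h : 2 ≤ x + y) : Gs x y = mexZ (preds x y) := by
  rw [Gs]
  simp only [if_neg (by omega : ¬ x + y = 0), if_neg (by omega : ¬ x + y = 1)]
  rfl

lemma mem_preds (x y : ℕ) (z : ℤ) :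
    z ∈ preds x y ↔ (∃ x' < x, Gs x' y = z) ∨ (∃ y' < y, Gs x y' = z) := by
  simp [preds, Finset.mem_union, Finset.mem_image, Subtype.exists, Finset.mem_range]

lemma mem_preds_val (x y : ℕ) (w : ℤ) (r : ℕ → ℕ) (hr : ∀ a, r (r a) = a)
    (hG : ∀ a b, a + b < x + y → (Gs a b = w ↔ b = r a)) :
    (w ∈ preds x y ↔ (r y < x ∨ r x < y)) := by
  rw [mem_preds]
  constructor
  · rintro (⟨x', hx', hg⟩ | ⟨y', hy', hg⟩)
    · left
      have h1 : y = r x' := (hG x' y (by omega)).1 hg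
      have h2 : r y = x' := by rw [h1, hr]
      omega
    · right
      have h1 : y' = r x := (hG x y' (by omega)).1 hg
      omega
  · rintro (h | h)
    · exact Or.inl ⟨r y, h, (hG _ _ (by omega)).2 (hr y).symm⟩
    · exact Or.inr ⟨r x, h, (hG _ _ (by omega)).2 rfl⟩

/-! ### main characterization -/

lemma key : ∀ s : ℕ, ∀ x y : ℕ, x + y = s →
    ((Gs x y = 0 ↔ y = r0 x) ∧ (Gs x y = 1 ↔ y = r1 x) ∧
     (Gs x y = 2 ↔ y = r2 x) ∧ (Gs x y = 3 ↔ y = r3 x)) := by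
  intro s
  induction s using Nat.strong_induction_on with
  | _ s IH =>
  intro x y hs
  subst hs
  rcases Nat.lt_or_ge (x + y) 2 with hlt | hge
  · -- base cases
    have hx : x ≤ 1 := by omega
    have hy : y ≤ 1 := by omega
    interval_cases x <;> interval_cases y <;>
      first
        | (exfalso; omega)
        | (rw [Gs]; norm_num [r0, r1, r2, r3])
  · have IH' : ∀ a b : ℕ, a + b < x + y →
        ((Gs a b = 0 ↔ b = r0 a) ∧ (Gs a b = 1 ↔ b = r1 a) ∧
         (Gs a b = 2 ↔ b = r2 a) ∧ (Gs a b = 3 ↔ b = r3 a)) :=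
      fun a b hab => IH (a + b) hab a b rfl
    have m0 : ((0:ℤ) ∈ preds x y ↔ (r0 y < x ∨ r0 x < y)) :=
      mem_preds_val x y 0 r0 r0_invol (fun a b hab => (IH' a b hab).1)
    have m1 : ((1:ℤ) ∈ preds x y ↔ (r1 y < x ∨ r1 x < y)) :=
      mem_preds_val x y 1 r1 r1_invol (fun a b hab => (IH' a b hab).2.1)
    have m2 : ((2:ℤ) ∈ preds x y ↔ (r2 y < x ∨ r2 x < y)) :=
      mem_preds_val x y 2 r2 r2_invol (fun a b hab => (IH' a b hab).2.2.1)
    have m3 : ((3:ℤ) ∈ preds x y ↔ (r3 y < x ∨ r3 x < y)) :=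
      mem_preds_val x y 3 r3 r3_invol (fun a b hab => (IH' a b hab).2.2.2)
    have hG := Gs_eq x y hge
    refine ⟨?_, ?_, ?_, ?_⟩
    · rw [hG, show (0:ℤ) = ((0:ℕ):ℤ) by norm_num, mexZ_eq_iff, ← arith0 x y hge]
      push_cast
      rw [m0]
      constructor
      · rintro ⟨hn, _⟩; exact hn
      · intro hn; exact ⟨hn, by omega⟩
    · rw [hG, show (1:ℤ) = ((1:ℕ):ℤ) by norm_num, mexZ_eq_iff, ← arith1 x y hge]
      constructor
      · rintro ⟨hn, hall⟩
        have h0 := hall 0 (by norm_num)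
        push_cast at hn h0
        rw [m1] at hn; rw [m0] at h0
        exact ⟨hn, h0⟩
      · rintro ⟨hn, h0⟩
        refine ⟨by push_cast; rw [m1]; exact hn, fun w hw => ?_⟩
        interval_cases w
        · push_cast; rw [m0]; exact h0
    · rw [hG, show (2:ℤ) = ((2:ℕ):ℤ) by norm_num, mexZ_eq_iff, ← arith2 x y hge]
      constructor
      · rintro ⟨hn, hall⟩
        have h0 := hall 0 (by norm_num)
        have h1 := hall 1 (by norm_num)
        push_cast at hn h0 h1
        rw [m2] at hn; rw [m0] at h0; rw [m1] at h1
        exact ⟨hn, h0, h1⟩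
      · rintro ⟨hn, h0, h1⟩
        refine ⟨by push_cast; rw [m2]; exact hn, fun w hw => ?_⟩
        interval_cases w
        · push_cast; rw [m0]; exact h0
        · push_cast; rw [m1]; exact h1
    · rw [hG, show (3:ℤ) = ((3:ℕ):ℤ) by norm_num, mexZ_eq_iff, ← arith3 x y hge]
      constructor
      · rintro ⟨hn, hall⟩
        have h0 := hall 0 (by norm_num)
        have h1 := hall 1 (by norm_num)
        have h2 := hall 2 (by norm_num)
        push_cast at hn h0 h1 h2
        rw [m3] at hn; rw [m0] at h0; rw [m1] at h1; rw [m2] at h2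
        exact ⟨hn, h0, h1, h2⟩
      · rintro ⟨hn, h0, h1, h2⟩
        refine ⟨by push_cast; rw [m3]; exact hn, fun w hw => ?_⟩
        interval_cases w
        · push_cast; rw [m0]; exact h0
        · push_cast; rw [m1]; exact h1
        · push_cast; rw [m2]; exact h2

theorem Gs_eq_three_iff (x y : ℕ) :
    Gs x y = 3 ↔
      ((∃ n : ℕ, 2 ≤ n ∧
          ((x = 4 * n - 2 ∧ y = 4 * n) ∨ (x = 4 * n - 1 ∧ y = 4 * n + 1) ∨
           (x = 4 * n ∧ y = 4 * n - 2) ∨ (x = 4 * n + 1 ∧ y = 4 * n - 1))) ∨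
        (x, y) = (0, 4) ∨ (x, y) = (1, 5) ∨ (x, y) = (2, 3) ∨
        (x, y) = (3, 2) ∨ (x, y) = (4, 0) ∨ (x, y) = (5, 1)) := by
  rw [(key (x + y) x y rfl).2.2.2]
  have hs := r3_spec x
  simp only [Prod.mk.injEq]
  constructor
  · intro h
    subst h
    rcases hs with ⟨h1, h2⟩ | ⟨h1, h2⟩ | ⟨h1, h2⟩ | ⟨h1, h2⟩ | ⟨h1, h2⟩ | ⟨h1, h2⟩ |
      ⟨h1, h2, h3⟩ | ⟨h1, h2, h3⟩
    · tauto
    · tauto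
    · tauto
    · tauto
    · tauto
    · tauto
    · -- x ≥ 6, x % 4 ≤ 1, r3 x = x - 2 : then x ≥ 8, x % 4 ∈ {0,1}
      left
      refine ⟨x / 4, by omega⟩
    · left
      refine ⟨(x + 2) / 4, by omega⟩
  · rintro (⟨n, hn, hc⟩ | h | h | h | h | h | h) <;> omega
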